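/- Let d : ℕ → A be admissible and not eventually periodic. Then for every n ≥ 1, Φ_n(d) ≤ |E(n)| ≤ (n + 1) · Φ_n(d). -/

import Mathlib

namespace BetaShift

variable {A : Type*}

/-- The shift map: `(shift x) n = x (n+1)`. -/
def shift (x : ℕ → A) : ℕ → A := fun n => x (n + 1)

/-- Lexicographic order on one-sided sequences: `x = y`, or there is an index `i`
such that `x j = y j` for all `j < i` and `x i < y i`. -/
def SeqLe [LinearOrder A] (x y : ℕ → A) : Prop :=
  x = y ∨ ∃ i, (∀ j, j < i → x j = y j) ∧ x i < y i

/-- A word `w` occurs in the sequence `x`. -/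
def Occurs (w : List A) (x : ℕ → A) : Prop :=
  ∃ i : ℕ, ∀ j : Fin w.length, x (i + j) = w.get j

/-- `Complexity x n` is the number `Φ_n(x)` of distinct words of length `n` occurring in `x`. -/
noncomputable def Complexity (x : ℕ → A) (n : ℕ) : ℕ :=
  Set.ncard {w : List A | w.length = n ∧ Occurs w x}

/-- A sequence is eventually periodic if there are `p ≥ 1` and `N` with
`d (i + p) = d i` for all `i ≥ N`. -/
def EventuallyPeriodic (d : ℕ → A) : Prop :=
  ∃ p, 1 ≤ p ∧ ∃ N, ∀ i, N ≤ i → d (i + p) = d i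

/-- `(d)_k`, the `k`-letter prefix of the sequence `d`, as a word. -/
def prefixWord (d : ℕ → A) (k : ℕ) : List A := List.ofFn (fun i : Fin k => d i)

variable {m : ℕ}

/-- `d` is admissible: every shift of `d` is lexicographically ≤ `d`,
and `d` is not eventually `0`. -/
def Admissible (d : ℕ → Fin m) : Prop :=
  (∀ i, SeqLe (shift^[i] d) d) ∧ ∀ N, ∃ i, N ≤ i ∧ (d i).val ≠ 0

/-- The one-sided β-shift `X_d` determined by the admissible sequence `d`. -/
def XSet (d : ℕ → Fin m) : Set (ℕ → Fin m) :=
  {x | ∀ i, SeqLe (shift^[i] x) d}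

/-- The language of `X_d`: all words occurring in some point of `X_d`. -/
def Lang (d : ℕ → Fin m) : Set (List (Fin m)) :=
  {w | ∃ x ∈ XSet d, Occurs w x}

/-- The follower set of the word `w` in `X_d`. -/
def Fol (d : ℕ → Fin m) (w : List (Fin m)) : Set (List (Fin m)) :=
  {u | w ++ u ∈ Lang d}

/-- The predecessor set of the word `w` in `X_d`. -/
def Pred (d : ℕ → Fin m) (w : List (Fin m)) : Set (List (Fin m)) :=
  {s | s ++ w ∈ Lang d}

/-- The extender set of the word `w` in `X_d`. -/
def Ext (d : ℕ → Fin m) (w : List (Fin m)) : Set (List (Fin m) × List (Fin m)) :=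
  {p | p.1 ++ w ++ p.2 ∈ Lang d}

/-- `|F(n)|`: the number of distinct follower sets of words of length `n` in `X_d`. -/
noncomputable def FolCount (d : ℕ → Fin m) (n : ℕ) : ℕ :=
  Set.ncard {S | ∃ w ∈ Lang d, w.length = n ∧ S = Fol d w}

/-- `|P(n)|`: the number of distinct predecessor sets of words of length `n` in `X_d`. -/
noncomputable def PredCount (d : ℕ → Fin m) (n : ℕ) : ℕ :=
  Set.ncard {S | ∃ w ∈ Lang d, w.length = n ∧ S = Pred d w}

/-- `|E(n)|`: the number of distinct extender sets of words of length `n` in `X_d`. -/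
noncomputable def ExtCount (d : ℕ → Fin m) (n : ℕ) : ℕ :=
  Set.ncard {S | ∃ w ∈ Lang d, w.length = n ∧ S = Ext d w}

/-- The largest `k ≤ n` such that the `k`-letter prefix of `d` is a suffix of `v`
(`k = 0`, the empty prefix, always works). -/
def classIndex (d : ℕ → Fin m) (n : ℕ) (v : List (Fin m)) : ℕ :=
  Nat.findGreatest (fun k => prefixWord d k <:+ v) n

/-- Lexicographic comparison of (equal-length) words: `u = v`, or at the first
index where they differ, `u` takes the smaller value. -/
def WordLe [LinearOrder A] (u v : List A) : Prop :=
  u = v ∨ ∃ i, ∃ (hu : i < u.length) (hv : i < v.length),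
    (∀ j (hju : j < u.length) (hjv : j < v.length), j < i → u.get ⟨j, hju⟩ = v.get ⟨j, hjv⟩) ∧
    u.get ⟨i, hu⟩ < v.get ⟨i, hv⟩

end BetaShift

open BetaShift

/-!
A word `w` lies in the language of `X_d` iff each suffix of `w` is lexicographically at most the
prefix of `d` of the same length: pad `w` with zeros, using that `d` is not eventually `0`.

If a factor `v` of `d` occurs at position `k`, then `(d₀ ⋯ d_{k-1}, [])` extends `v` but no
larger word of the same length, so `E` is injective on the `Φ_n(d)` factors of length `n`.

For a word `w` of the language that is not a factor, `s w u` lies in the language iff `u` is bounded by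
the segment of `d` that follows the longest prefix `(d)_J` of `d` occurring as a suffix of `w`
(shorter such prefixes give weaker bounds since every shift of `d` is below `d`), and every
suffix of `s` either is below the prefix of `d` of its length or equals it and `w` is below the
factor of `d` that follows. So `E(w)` depends only on `J < n` and on the least factor of `d` above
`w`, which leaves at most `n · Φ_n(d)` extender sets of non-factors.
-/

namespace BetaShift

section ListLex

variable {α : Type*} [LinearOrder α]

theorem append_lt_append_iff_of_length_eq {a a' b b' : List α} (h : a.length = a'.length) :
    a ++ b < a' ++ b' ↔ a < a' ∨ a = a' ∧ b < b' := by
  induction a generalizing a' with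
  | nil => cases a' <;> simp_all
  | cons x a ih =>
    cases a' with
    | nil => simp at h
    | cons y a' =>
      rw [List.cons_append, List.cons_append, List.cons_lt_cons_iff, List.cons_lt_cons_iff,
        ih (Nat.succ_injective h), List.cons.injEq]
      tauto

theorem append_le_append_iff_of_length_eq {a a' b b' : List α} (h : a.length = a'.length) :
    a ++ b ≤ a' ++ b' ↔ a < a' ∨ a = a' ∧ b ≤ b' := by
  have heq : a ++ b = a' ++ b' ↔ a = a' ∧ b = b' :=
    ⟨fun e => List.append_inj e h, fun ⟨rfl, rfl⟩ => rfl⟩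
  rw [le_iff_lt_or_eq, le_iff_lt_or_eq, append_lt_append_iff_of_length_eq h, heq]
  tauto

theorem append_le_append_left_iff {s b b' : List α} : s ++ b ≤ s ++ b' ↔ b ≤ b' := by
  simp [append_le_append_iff_of_length_eq rfl]

theorem append_le_append_iff_of_ne {a a' b b' : List α} (h : a.length = a'.length)
    (hne : a ≠ a') : a ++ b ≤ a' ++ b' ↔ a ≤ a' := by
  simp [append_le_append_iff_of_length_eq h, le_iff_lt_or_eq, hne]

end ListLex

section Window

variable {A : Type*}

def window (x : ℕ → A) (k n : ℕ) : List A := List.ofFn fun i : Fin n => x (k + i)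

@[simp] theorem length_window (x : ℕ → A) (k n : ℕ) : (window x k n).length = n := by
  simp [window]

@[simp] theorem length_prefixWord (x : ℕ → A) (n : ℕ) : (prefixWord x n).length = n := by
  simp [prefixWord]

@[simp] theorem window_zero_left (x : ℕ → A) (n : ℕ) : window x 0 n = prefixWord x n := by
  simp [window, prefixWord]

theorem window_add (x : ℕ → A) (k a b : ℕ) :
    window x k (a + b) = window x k a ++ window x (k + a) b := by
  simp [window, List.ofFn_add, Nat.add_assoc]

theorem prefixWord_add (x : ℕ → A) (a b : ℕ) :
    prefixWord x (a + b) = prefixWord x a ++ window x a b := by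
  rw [← window_zero_left, window_add, window_zero_left, Nat.zero_add]

theorem drop_window (x : ℕ → A) (k n i : ℕ) : (window x k n).drop i = window x (k + i) (n - i) :=
  List.ext_getElem (by simp) fun j _ _ => by simp [window, Nat.add_assoc]

theorem shift_iterate_apply (x : ℕ → A) (k t : ℕ) : (shift^[k] x) t = x (k + t) := by
  induction k generalizing t with
  | zero => simp
  | succ k ih => rw [Function.iterate_succ_apply', shift, ih, Nat.add_right_comm, Nat.add_assoc]

theorem prefixWord_shift_iterate (x : ℕ → A) (k n : ℕ) :
    prefixWord (shift^[k] x) n = window x k n := by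
  simp [prefixWord, window, shift_iterate_apply]

theorem occurs_iff_exists_window {w : List A} {x : ℕ → A} :
    Occurs w x ↔ ∃ k, window x k w.length = w := by
  refine exists_congr fun k => ⟨fun h => List.ext_getElem (by simp) fun j _ hj => ?_,
    fun h j => ?_⟩
  · simpa [window] using h ⟨j, hj⟩
  · rw [List.get_eq_getElem, List.getElem_of_eq h.symm]
    simp [window]

end Window

section SeqLe

variable {A : Type*} [LinearOrder A] {x y : ℕ → A}

theorem prefixWord_lt_prefixWord_iff {n : ℕ} :
    prefixWord x n < prefixWord y n ↔ ∃ i < n, (∀ j < i, x j = y j) ∧ x i < y i := by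
  simp [List.lt_iff_exists, prefixWord]
  tauto

theorem SeqLe.prefixWord_le (h : SeqLe x y) (n : ℕ) : prefixWord x n ≤ prefixWord y n := by
  rcases h with rfl | ⟨i, heq, hlt⟩
  · exact le_rfl
  rcases lt_or_ge i n with hin | hni
  · exact (prefixWord_lt_prefixWord_iff.mpr ⟨i, hin, heq, hlt⟩).le
  · exact (congrArg List.ofFn (funext fun j : Fin n => heq j (by omega))).le

theorem seqLe_of_prefixWord_lt {n : ℕ} (h : prefixWord x n < prefixWord y n) : SeqLe x y := by
  obtain ⟨i, -, heq, hlt⟩ := prefixWord_lt_prefixWord_iff.mp h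
  exact Or.inr ⟨i, heq, hlt⟩

end SeqLe

section Language

variable {m : ℕ} {d : ℕ → Fin m}

theorem window_le_prefixWord_of_mem_XSet {x : ℕ → Fin m} (hx : x ∈ XSet d) (k n : ℕ) :
    window x k n ≤ prefixWord d n := by
  simpa [prefixWord_shift_iterate] using (hx k).prefixWord_le n

theorem drop_le_prefixWord_of_mem_lang {w : List (Fin m)} (hw : w ∈ Lang d) (i : ℕ) :
    w.drop i ≤ prefixWord d (w.length - i) := by
  obtain ⟨x, hx, hocc⟩ := hw
  obtain ⟨k, hk⟩ := occurs_iff_exists_window.mp hocc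
  rw [← hk, drop_window, length_window]
  exact window_le_prefixWord_of_mem_XSet hx _ _

theorem seqLe_of_agree_of_eq_zero [NeZero m] (hd : Admissible d) {y : ℕ → Fin m} {r : ℕ}
    (hagree : ∀ q < r, y q = d q) (hzero : ∀ q, r ≤ q → y q = 0) : SeqLe y d := by
  classical
  have hex : ∃ p, r ≤ p ∧ d p ≠ 0 := by
    obtain ⟨p, hp, hne⟩ := hd.2 r
    exact ⟨p, hp, fun h => hne (by simp [h])⟩
  obtain ⟨hrp, hdp⟩ := Nat.find_spec hex
  refine Or.inr ⟨Nat.find hex, fun q hq => ?_, ?_⟩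
  · rcases lt_or_ge q r with hqr | hqr
    · exact hagree q hqr
    · simpa [hzero q hqr, hqr, eq_comm] using Nat.find_min hex hq
  · rw [hzero _ hrp]
    exact Fin.pos_iff_ne_zero.mpr hdp

theorem mem_lang_iff [NeZero m] (hd : Admissible d) {w : List (Fin m)} :
    w ∈ Lang d ↔ ∀ i, w.drop i ≤ prefixWord d (w.length - i) := by
  refine ⟨drop_le_prefixWord_of_mem_lang, fun h => ?_⟩
  let x : ℕ → Fin m := fun t => w.getD t 0
  have hwindow : ∀ i, window x i (w.length - i) = w.drop i := fun i =>
    List.ext_getElem (by simp) fun j _ hj => by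
      simp only [List.length_drop] at hj
      simp [x, window, List.getElem?_eq_getElem (show i + j < w.length by omega)]
  refine ⟨x, fun i => ?_, occurs_iff_exists_window.mpr ⟨0, by simpa using hwindow 0⟩⟩
  rcases (h i).lt_or_eq with hlt | heq
  · exact seqLe_of_prefixWord_lt (n := w.length - i) (by rwa [prefixWord_shift_iterate, hwindow])
  · rw [← hwindow, ← prefixWord_shift_iterate, prefixWord, prefixWord, List.ofFn_inj] at heq
    refine seqLe_of_agree_of_eq_zero hd (r := w.length - i) (fun q hq => congrFun heq ⟨q, hq⟩)
      fun q hq => ?_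
    simp [shift_iterate_apply, x, List.getElem?_eq_none (show w.length ≤ i + q by omega)]

theorem prefixWord_mem_lang (hd : Admissible d) (n : ℕ) : prefixWord d n ∈ Lang d :=
  ⟨d, hd.1, occurs_iff_exists_window.mpr ⟨0, by simp⟩⟩

theorem append_mem_lang_iff [NeZero m] (hd : Admissible d) {a b : List (Fin m)} :
    a ++ b ∈ Lang d ↔ b ∈ Lang d ∧
      ∀ i ≤ a.length, a.drop i ++ b ≤ prefixWord d (a.length - i + b.length) := by
  simp only [mem_lang_iff hd, List.length_append]
  refine ⟨fun h => ⟨fun i => ?_, fun i hi => ?_⟩, fun ⟨hb, ha⟩ i => ?_⟩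
  · simpa [List.drop_length_add_append, Nat.add_sub_add_left] using h (a.length + i)
  · simpa [List.drop_append_of_le_length hi, Nat.sub_add_comm hi] using h i
  · rcases le_total i a.length with hi | hi
    · simpa [List.drop_append_of_le_length hi, Nat.sub_add_comm hi] using ha i hi
    · obtain ⟨j, rfl⟩ := Nat.exists_eq_add_of_le hi
      simpa [List.drop_length_add_append, Nat.add_sub_add_left] using hb j

end Language

section Extenders

variable {m : ℕ} {d : ℕ → Fin m}

theorem prefixWord_classIndex_suffix (d : ℕ → Fin m) (n : ℕ) (v : List (Fin m)) :
    prefixWord d (classIndex d n v) <:+ v :=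
  Nat.findGreatest_spec (P := fun k => prefixWord d k <:+ v) (Nat.zero_le n) (by simp [prefixWord])

theorem classIndex_le (d : ℕ → Fin m) (n : ℕ) (v : List (Fin m)) : classIndex d n v ≤ n :=
  Nat.findGreatest_le n

theorem le_classIndex {n k : ℕ} {v : List (Fin m)} (hk : k ≤ n) (h : prefixWord d k <:+ v) :
    k ≤ classIndex d n v :=
  Nat.le_findGreatest hk h

theorem window_le_window_of_suffix (hd : Admissible d) {k j : ℕ}
    (h : prefixWord d k <:+ prefixWord d j) (ℓ : ℕ) : window d j ℓ ≤ window d k ℓ := by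
  have hkj : k ≤ j := by simpa using h.length_le
  have hwindow : window d (j - k) k = prefixWord d k := by
    have := List.suffix_iff_eq_drop.mp h
    rw [← window_zero_left d j, drop_window] at this
    simpa [Nat.sub_sub_self hkj] using this.symm
  have := window_le_prefixWord_of_mem_XSet hd.1 (j - k) (k + ℓ)
  rwa [window_add, prefixWord_add, hwindow, append_le_append_left_iff,
    Nat.sub_add_cancel hkj] at this

theorem append_mem_lang_iff_of_mem_lang [NeZero m] (hd : Admissible d) {w u : List (Fin m)}
    (hw : w ∈ Lang d) :
    w ++ u ∈ Lang d ↔ u ∈ Lang d ∧ u ≤ window d (classIndex d w.length w) u.length := by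
  set J := classIndex d w.length w
  have hJ : prefixWord d J <:+ w := prefixWord_classIndex_suffix d _ w
  have hJlen : J ≤ w.length := classIndex_le d _ w
  rw [append_mem_lang_iff hd]
  refine and_congr_right fun _ => ⟨fun h => ?_, fun h i hi => ?_⟩
  · have hdrop : w.drop (w.length - J) = prefixWord d J := by
      simpa using (List.suffix_iff_eq_drop.mp hJ).symm
    have := h (w.length - J) (Nat.sub_le _ _)
    rwa [hdrop, Nat.sub_sub_self hJlen, prefixWord_add, append_le_append_left_iff] at this
  · rw [prefixWord_add, append_le_append_iff_of_length_eq (by simp)]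
    rcases (drop_le_prefixWord_of_mem_lang hw i).lt_or_eq with hlt | heq
    · exact Or.inl hlt
    · have hsuffix : prefixWord d (w.length - i) <:+ w := heq ▸ List.drop_suffix i w
      have hle : w.length - i ≤ J := le_classIndex (Nat.sub_le _ _) hsuffix
      exact Or.inr ⟨heq, h.trans (window_le_window_of_suffix hd
        (List.suffix_of_suffix_length_le hsuffix hJ (by simpa using hle)) _)⟩

theorem mem_ext_iff_of_not_occurs [NeZero m] (hd : Admissible d) {w : List (Fin m)}
    (hw : w ∈ Lang d) (hocc : ¬ Occurs w d) {s u : List (Fin m)} :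
    (s, u) ∈ Ext d w ↔ (u ∈ Lang d ∧ u ≤ window d (classIndex d w.length w) u.length) ∧
      ∀ i ≤ s.length, s.drop i < prefixWord d (s.length - i) ∨
        s.drop i = prefixWord d (s.length - i) ∧ w ≤ window d (s.length - i) w.length := by
  change s ++ w ++ u ∈ Lang d ↔ _
  rw [List.append_assoc, append_mem_lang_iff hd, append_mem_lang_iff_of_mem_lang hd hw]
  refine and_congr_right fun _ => forall₂_congr fun i hi => ?_
  have hne : w ≠ window d (s.length - i) w.length := fun h =>
    hocc (occurs_iff_exists_window.mpr ⟨_, h.symm⟩)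
  rw [List.length_append, prefixWord_add, window_add,
    append_le_append_iff_of_length_eq (by simp), append_le_append_iff_of_ne (by simp) hne]

theorem ext_eq_of_not_occurs [NeZero m] (hd : Admissible d) {n : ℕ} {w w' : List (Fin m)}
    (hw : w ∈ Lang d) (hw' : w' ∈ Lang d) (hocc : ¬ Occurs w d) (hocc' : ¬ Occurs w' d)
    (hn : w.length = n) (hn' : w'.length = n) (hJ : classIndex d n w = classIndex d n w')
    (hwindow : ∀ k, w ≤ window d k n ↔ w' ≤ window d k n) : Ext d w = Ext d w' := by
  ext ⟨s, u⟩
  simp only [mem_ext_iff_of_not_occurs hd hw hocc, mem_ext_iff_of_not_occurs hd hw' hocc', hn,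
    hn', hJ, hwindow]

theorem le_of_ext_subset (hd : Admissible d) {v v' : List (Fin m)} (hv : Occurs v d)
    (hlen : v'.length = v.length) (h : Ext d v ⊆ Ext d v') : v' ≤ v := by
  obtain ⟨k, hk⟩ := occurs_iff_exists_window.mp hv
  have hmem : (prefixWord d k, []) ∈ Ext d v := by
    change prefixWord d k ++ v ++ [] ∈ Lang d
    rw [List.append_nil, ← hk, ← prefixWord_add]
    exact prefixWord_mem_lang hd _
  have := drop_le_prefixWord_of_mem_lang (h hmem) 0
  simp only [List.append_nil, List.drop_zero, List.length_append, length_prefixWord, hlen,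
    Nat.sub_zero, prefixWord_add, hk, append_le_append_left_iff] at this
  exact this

end Extenders

theorem ncard_image_le_ncard_image_of_eq {α β γ : Type*} {s : Set α} {f : α → β} {g : α → γ}
    (hs : (g '' s).Finite) (h : ∀ a ∈ s, ∀ b ∈ s, g a = g b → f a = f b) :
    (f '' s).ncard ≤ (g '' s).ncard := by
  rcases s.eq_empty_or_nonempty with rfl | ⟨a₀, -⟩
  · simp
  have : Nonempty α := ⟨a₀⟩
  have hmem {a} (ha : a ∈ s) := Function.invFunOn_mem (f := f) ⟨a, ha, rfl⟩
  have heq {a} (ha : a ∈ s) := Function.invFunOn_eq (f := f) ⟨a, ha, rfl⟩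
  refine Set.ncard_le_ncard_of_injOn (g ∘ Function.invFunOn f s) ?_ ?_ hs
  · rintro _ ⟨a, ha, rfl⟩
    exact ⟨_, hmem ha, rfl⟩
  · rintro _ ⟨a, ha, rfl⟩ _ ⟨b, hb, rfl⟩ hab
    rw [← heq ha, ← heq hb]
    exact h _ (hmem ha) _ (hmem hb) hab

section Counting

def factors {A : Type*} (x : ℕ → A) (n : ℕ) : Set (List A) := {w | w.length = n ∧ Occurs w x}

variable {m : ℕ} {d : ℕ → Fin m}

theorem finite_factors (d : ℕ → Fin m) (n : ℕ) : (factors d n).Finite :=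
  (List.finite_length_eq _ n).subset fun _ hw => hw.1

theorem extCount_eq_ncard_image (d : ℕ → Fin m) (n : ℕ) :
    ExtCount d n = (Ext d '' {w | w ∈ Lang d ∧ w.length = n}).ncard := by
  rw [ExtCount]
  congr 1
  ext S
  simp [eq_comm, and_assoc]

theorem complexity_le_extCount (hd : Admissible d) (n : ℕ) : Complexity d n ≤ ExtCount d n := by
  rw [extCount_eq_ncard_image]
  refine Set.ncard_le_ncard_of_injOn (s := factors d n) (Ext d)
    (fun w hw => ⟨w, ⟨⟨d, hd.1, hw.2⟩, hw.1⟩, rfl⟩) (fun v hv v' hv' h => ?_)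
    (((List.finite_length_eq _ n).subset fun _ hw => hw.2).image _)
  have hlen : v'.length = v.length := hv'.1.trans hv.1.symm
  exact le_antisymm (le_of_ext_subset hd hv'.2 hlen.symm h.ge) (le_of_ext_subset hd hv.2 hlen h.le)

theorem exists_mem_factors_le_window_iff {n : ℕ} {w : List (Fin m)} (hw : w ∈ Lang d)
    (hn : w.length = n) : ∃ v ∈ factors d n, ∀ k, w ≤ window d k n ↔ v ≤ window d k n := by
  subst hn
  have hwindow (k : ℕ) : window d k w.length ∈ factors d w.length :=
    ⟨length_window .., occurs_iff_exists_window.mpr ⟨k, by simp⟩⟩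
  obtain ⟨v, ⟨hvF, hwv⟩, hmin⟩ := Set.exists_min_image {v | v ∈ factors d w.length ∧ w ≤ v} id
    ((finite_factors d _).subset fun _ hv => hv.1)
    ⟨_, hwindow 0, by simpa using drop_le_prefixWord_of_mem_lang hw 0⟩
  exact ⟨v, hvF, fun k => ⟨fun h => hmin _ ⟨hwindow k, h⟩, hwv.trans⟩⟩

theorem classIndex_lt_of_not_occurs {n : ℕ} {w : List (Fin m)} (hocc : ¬ Occurs w d)
    (hn : w.length = n) : classIndex d n w < n := by
  subst hn
  refine (classIndex_le d _ w).lt_of_ne fun h => hocc (occurs_iff_exists_window.mpr ⟨0, ?_⟩)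
  have := prefixWord_classIndex_suffix d w.length w
  rw [h] at this
  simpa using this.eq_of_length (by simp)

theorem ncard_ext_image_not_factors_le [NeZero m] (hd : Admissible d) (n : ℕ) :
    (Ext d '' ({w | w ∈ Lang d ∧ w.length = n} \ factors d n)).ncard ≤ n * Complexity d n := by
  set F := factors d n
  choose! v hvF hvwindow using
    fun w (hw : w ∈ Lang d ∧ w.length = n) => exists_mem_factors_le_window_iff hw.1 hw.2
  let key : List (Fin m) → ℕ × List (Fin m) := fun w => (classIndex d n w, v w)
  have hkey : key '' ({w | w ∈ Lang d ∧ w.length = n} \ F) ⊆ (Finset.range n : Set ℕ) ×ˢ F := by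
    rintro _ ⟨w, ⟨hwL, hwF⟩, rfl⟩
    exact ⟨by simpa using classIndex_lt_of_not_occurs (fun h => hwF ⟨hwL.2, h⟩) hwL.2,
      hvF w hwL⟩
  have hfin : ((Finset.range n : Set ℕ) ×ˢ F).Finite :=
    (Finset.range n).finite_toSet.prod (finite_factors d n)
  calc _ ≤ (key '' ({w | w ∈ Lang d ∧ w.length = n} \ F)).ncard := by
        refine ncard_image_le_ncard_image_of_eq (hfin.subset hkey)
          fun w ⟨hwL, hwF⟩ w' ⟨hw'L, hw'F⟩ h => ?_
        obtain ⟨hJ, hv⟩ : classIndex d n w = classIndex d n w' ∧ v w = v w' := Prod.mk.inj h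
        refine ext_eq_of_not_occurs hd hwL.1 hw'L.1 (fun o => hwF ⟨hwL.2, o⟩)
          (fun o => hw'F ⟨hw'L.2, o⟩) hwL.2 hw'L.2 hJ fun k => ?_
        rw [hvwindow w hwL, hvwindow w' hw'L, hv]
    _ ≤ ((Finset.range n : Set ℕ) ×ˢ F).ncard := Set.ncard_le_ncard hkey hfin
    _ = n * F.ncard := by rw [Set.ncard_prod, Set.ncard_coe_finset, Finset.card_range]

theorem extCount_le [NeZero m] (hd : Admissible d) (n : ℕ) :
    ExtCount d n ≤ (n + 1) * Complexity d n := by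
  set L := {w | w ∈ Lang d ∧ w.length = n}
  have hFL : factors d n ⊆ L := fun w hw => ⟨⟨d, hd.1, hw.2⟩, hw.1⟩
  calc ExtCount d n = (Ext d '' factors d n ∪ Ext d '' (L \ factors d n)).ncard := by
        rw [extCount_eq_ncard_image, ← Set.image_union, Set.union_sdiff_cancel hFL]
    _ ≤ (Ext d '' factors d n).ncard + (Ext d '' (L \ factors d n)).ncard :=
      Set.ncard_union_le _ _
    _ ≤ Complexity d n + n * Complexity d n :=
      add_le_add (Set.ncard_image_le (finite_factors d n)) (ncard_ext_image_not_factors_le hd n)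
    _ = (n + 1) * Complexity d n := by ring

end Counting

end BetaShift

theorem stmt17_general (m : ℕ) (d : ℕ → Fin m) (hd : Admissible d) (n : ℕ) :
    Complexity d n ≤ ExtCount d n ∧ ExtCount d n ≤ (n + 1) * Complexity d n :=
  have : NeZero m := ⟨(d 0).pos.ne'⟩
  ⟨complexity_le_extCount hd n, extCount_le hd n⟩

/-- for non-sofic β-shifts, `Φ_n(d) ≤ |E(n)| ≤ (n+1)·Φ_n(d)`. -/
theorem stmt17 (m : ℕ) (hm : 1 ≤ m) (d : ℕ → Fin m) (hd : Admissible d)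
    (hnp : ¬ EventuallyPeriodic d) (n : ℕ) (hn : 1 ≤ n) :
    Complexity d n ≤ ExtCount d n ∧ ExtCount d n ≤ (n + 1) * Complexity d n :=
  stmt17_general m d hd n
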